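/- For n ≥ 5, the configuration space of n distinct labeled points on the Riemann sphere modulo Möbius transformations, equivalently the open subset M_{0,n} = {(x_4, …, x_n) ∈ (C \ {0,1})^{n−3} : x_i ≠ x_j for i ≠ j}, is connected and has exactly one end. -/

import Mathlib

/-!
Moving one coordinate of a point of `configSpace ι`, or translating all coordinates by a
common `t ∈ ℂ`, leaves `configSpace ι` for only finitely many values of the parameter, and the
complement of a countable subset of `ℂ` is path connected; so such motions give paths.

Outside a ball of radius `R`, any point is joined to one with two coordinates of norm `> R`, and
two such points are joined through a common point whose coordinates are all fresh and huge:
replace the coordinates one at a time, always keeping some other coordinate of norm `> R`.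

A compact `K ⊆ configSpace ι` lies in `K' = closedBall 0 R \ thickening δ (configSpace ι)ᶜ`. A
point `y ∉ K'` is either outside the ball, or `δ`-close to a degenerate `v`. If `v i ∈ {0, 1}`,
push another coordinate of `y` to infinity; if `v i = v j`, translate `y` to infinity. Doing the
same to `v` keeps it degenerate and at the same distance, so the path avoids `K'`.
-/

open Function Set Metric

section Paths

theorem joinedIn_of_countable_setOf_notMem {E : Type*} [TopologicalSpace E] {T : Set E}
    {f : ℂ → E} (hf : Continuous f) (hT : {t | f t ∉ T}.Countable) {a b : ℂ}
    (ha : f a ∈ T) (hb : f b ∈ T) : JoinedIn T (f a) (f b) := by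
  have hpc : IsPathConnected {t | f t ∉ T}ᶜ :=
    hT.isPathConnected_compl_of_one_lt_rank (by rw [Complex.rank_real_complex]; norm_num)
  obtain ⟨γ, hγ⟩ := hpc.joinedIn a (not_not.2 ha) b (not_not.2 hb)
  exact ⟨γ.map hf, fun s => not_not.1 (hγ s)⟩

theorem Set.Countable.exists_lt_norm_notMem {F : Set ℂ} (hF : F.Countable) (R : ℝ) :
    ∃ z, R < ‖z‖ ∧ z ∉ F :=
  (hF.dense_compl ℂ).inter_open_nonempty _ (isOpen_lt continuous_const continuous_norm)
    (NormedSpace.exists_lt_norm ℝ ℂ R)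

variable {ι : Type*} [DecidableEq ι]

theorem joinedIn_update {T : Set (ι → ℂ)} {x : ι → ℂ} {a : ι} {b : ℂ}
    (hT : {z | update x a z ∉ T}.Countable) (hx : x ∈ T) (hb : update x a b ∈ T) :
    JoinedIn T x (update x a b) := by
  simpa only [update_eq_self] using joinedIn_of_countable_setOf_notMem
    (continuous_const.update a continuous_id) hT (a := x a) (by rwa [update_eq_self]) hb

theorem joinedIn_piecewise {T : Set (ι → ℂ)} {x y : ι → ℂ} (s : Finset ι)
    (hmem : ∀ t ⊆ s, t.piecewise y x ∈ T)
    (hT : ∀ t ⊆ s, ∀ a ∉ t, {z | update (t.piecewise y x) a z ∉ T}.Countable) :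
    JoinedIn T x (s.piecewise y x) := by
  induction s using Finset.induction_on with
  | empty => simpa using JoinedIn.refl (hmem ∅ subset_rfl)
  | insert a s has ih =>
    have hs : s ⊆ insert a s := Finset.subset_insert a s
    refine (ih (fun t ht => hmem t (ht.trans hs)) fun t ht => hT t (ht.trans hs)).trans ?_
    rw [Finset.piecewise_insert]
    refine joinedIn_update (hT s hs a has) (hmem s hs) ?_
    rw [← Finset.piecewise_insert]
    exact hmem _ subset_rfl

end Paths

theorem notMem_closedBall_zero_iff_exists_lt_norm {ι : Type*} [Fintype ι] [Nonempty ι]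
    {E : ι → Type*} [∀ i, SeminormedAddCommGroup (E i)] {w : ∀ i, E i} {R : ℝ} :
    w ∉ closedBall 0 R ↔ ∃ i, R < ‖w i‖ := by
  simp [pi_norm_le_iff_of_nonempty]

def configSpace (ι : Type*) : Set (ι → ℂ) :=
  {x | (∀ i, x i ≠ 0 ∧ x i ≠ 1) ∧ Injective x}

section configSpace

variable {ι : Type*}

theorem isOpen_configSpace [Finite ι] : IsOpen (configSpace ι) := by
  have h : configSpace ι = (⋂ i, {x : ι → ℂ | x i ≠ 0} ∩ {x | x i ≠ 1}) ∩
      ⋂ (i) (j) (_ : i ≠ j), {x | x i ≠ x j} := by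
    ext x
    simp only [configSpace, Injective, mem_inter_iff, mem_iInter]
    refine and_congr Iff.rfl ⟨fun h i j hij hx => hij (h hx), fun h i j hx => ?_⟩
    by_contra hij
    exact h i j hij hx
  rw [h]
  exact .inter (isOpen_iInter_of_finite fun i =>
      (isOpen_ne_fun (continuous_apply i) continuous_const).inter
        (isOpen_ne_fun (continuous_apply i) continuous_const))
    (isOpen_iInter_of_finite fun i => isOpen_iInter_of_finite fun j =>
      isOpen_iInter_of_finite fun _ => isOpen_ne_fun (continuous_apply i) (continuous_apply j))

theorem update_mem_configSpace [DecidableEq ι] {x : ι → ℂ} (hx : x ∈ configSpace ι)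
    {a : ι} {z : ℂ} (h0 : z ≠ 0) (h1 : z ≠ 1) (hz : ∀ j ≠ a, x j ≠ z) :
    update x a z ∈ configSpace ι := by
  refine ⟨fun i => ?_, fun i j hij => ?_⟩
  · rcases eq_or_ne i a with rfl | hi
    · simp [h0, h1]
    · simpa [hi] using hx.1 i
  · by_cases hi : i = a <;> by_cases hj : j = a
    · rw [hi, hj]
    · subst hi
      rw [update_self, update_of_ne hj] at hij
      exact absurd hij.symm (hz j hj)
    · subst hj
      rw [update_self, update_of_ne hi] at hij
      exact absurd hij (hz i hi)
    · rw [update_of_ne hi, update_of_ne hj] at hij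
      exact hx.2 hij

theorem countable_setOf_update_notMem_configSpace [Finite ι] [DecidableEq ι] {x : ι → ℂ}
    (hx : x ∈ configSpace ι) (a : ι) : {z | update x a z ∉ configSpace ι}.Countable := by
  refine ((((finite_range x).insert 1).insert 0).subset fun z hz => ?_).countable
  by_contra h
  simp only [mem_insert_iff, mem_range, not_or, not_exists] at h
  exact hz (update_mem_configSpace hx h.1 h.2.1 fun j _ => h.2.2 j)

theorem countable_setOf_add_notMem_configSpace [Finite ι] {x : ι → ℂ}
    (hx : x ∈ configSpace ι) : {t | (x + fun _ => t) ∉ configSpace ι}.Countable := by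
  refine (((finite_range fun i => -x i).union (finite_range fun i => 1 - x i)).subset
    fun t ht => ?_).countable
  by_contra h
  simp only [mem_union, mem_range, not_or, not_exists] at h
  refine ht ⟨fun i => ⟨fun h0 => h.1 i ?_, fun h1 => h.2 i ?_⟩,
    fun i j hij => hx.2 (add_right_cancel hij)⟩
  · exact neg_eq_of_add_eq_zero_right h0
  · exact (eq_sub_of_add_eq' h1).symm

theorem piecewise_mem_configSpace {x y : ι → ℂ} (hx : x ∈ configSpace ι) (hy : y ∈ configSpace ι)
    (hxy : ∀ i j, y i ≠ x j) (s : Finset ι) [∀ j, Decidable (j ∈ s)] :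
    s.piecewise y x ∈ configSpace ι := by
  refine ⟨fun i => ?_, fun i j hij => ?_⟩
  · by_cases hi : i ∈ s
    · simpa [hi] using hy.1 i
    · simpa [hi] using hx.1 i
  · by_cases hi : i ∈ s <;> by_cases hj : j ∈ s <;>
      simp only [Finset.piecewise, hi, hj, if_true, if_false] at hij
    · exact hy.2 hij
    · exact absurd hij (hxy i j)
    · exact absurd hij.symm (hxy j i)
    · exact hx.2 hij

theorem exists_mem_configSpace_forall_lt_norm [Countable ι] (R : ℝ) :
    ∃ q ∈ configSpace ι, ∀ i, R < ‖q i‖ := by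
  obtain ⟨f, hf⟩ := exists_injective_nat ι
  have hlt : ∀ i, max R 1 < ‖((f i + |R| + 2 : ℝ) : ℂ)‖ := fun i => by
    rw [Complex.norm_real, Real.norm_of_nonneg (by positivity)]
    have := Nat.cast_nonneg (α := ℝ) (f i)
    exact max_lt (by linarith [le_abs_self R]) (by linarith [abs_nonneg R])
  refine ⟨fun i => ((f i + |R| + 2 : ℝ) : ℂ), ⟨fun i => ⟨fun h => ?_, fun h => ?_⟩,
    fun i j hij => hf ?_⟩, fun i => (le_max_left R 1).trans_lt (hlt i)⟩
  · exact absurd ((le_max_right R 1).trans_lt (hlt i)) (by norm_num [h])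
  · exact absurd ((le_max_right R 1).trans_lt (hlt i)) (by norm_num [h])
  · simpa using hij

end configSpace

theorem dist_update_update_le {ι : Type*} [Fintype ι] [DecidableEq ι] {E : ι → Type*}
    [∀ i, PseudoMetricSpace (E i)] (x y : ∀ i, E i) (a : ι) (z : E a) :
    dist (update x a z) (update y a z) ≤ dist x y := by
  refine (dist_pi_le_iff dist_nonneg).2 fun i => ?_
  rcases eq_or_ne i a with rfl | hi
  · simp
  · simpa [hi] using dist_le_pi_dist x y i

theorem notMem_closedBall_zero_of_lt_norm_apply {ι : Type*} [Fintype ι] {E : ι → Type*}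
    [∀ i, SeminormedAddCommGroup (E i)] {w : ∀ i, E i} {R : ℝ} {i : ι} (h : R < ‖w i‖) :
    w ∉ closedBall 0 R := fun hw =>
  (h.trans_le (norm_le_pi_norm w i)).not_ge (mem_closedBall_zero_iff.1 hw)

theorem joinedIn_inter_thickening_compl {E : Type*} [PseudoMetricSpace E] {S : Set E} {δ : ℝ}
    {f g : ℂ → E} (hf : Continuous f) (hS : {t | f t ∉ S}.Countable) (hg : ∀ t, g t ∉ S)
    (hfg : ∀ t, dist (f t) (g t) < δ) {a b : ℂ} (ha : f a ∈ S) (hb : f b ∈ S) :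
    JoinedIn (S ∩ thickening δ Sᶜ) (f a) (f b) := by
  have hth : ∀ t, f t ∈ thickening δ Sᶜ := fun t => mem_thickening_iff.2 ⟨g t, hg t, hfg t⟩
  exact joinedIn_of_countable_setOf_notMem (T := S ∩ thickening δ Sᶜ) hf
    (hS.mono fun t ht h => ht ⟨h, hth t⟩)
    ⟨ha, hth a⟩ ⟨hb, hth b⟩

section OneEnd

variable {ι : Type*} [Fintype ι]

theorem joinedIn_configSpace_diff_closedBall_of_fresh [DecidableEq ι] [Nonempty ι] {R : ℝ}
    {x q : ι → ℂ} (hx : x ∈ configSpace ι) (hxR : ∀ a, ∃ j ≠ a, R < ‖x j‖)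
    (hq : q ∈ configSpace ι) (hqR : ∀ i, R < ‖q i‖) (hqx : ∀ i j, q i ≠ x j) :
    JoinedIn (configSpace ι \ closedBall 0 R) x q := by
  have hmem (t : Finset ι) : t.piecewise q x ∈ configSpace ι :=
    piecewise_mem_configSpace hx hq hqx t
  have hfar (t : Finset ι) (a : ι) : ∃ j ≠ a, R < ‖t.piecewise q x j‖ := by
    obtain ⟨j, hja, hj⟩ := hxR a
    refine ⟨j, hja, ?_⟩
    by_cases hjt : j ∈ t <;> simp [hjt, hj, hqR]
  have hball (t : Finset ι) (a : ι) (z : ℂ) : update (t.piecewise q x) a z ∉ closedBall 0 R := by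
    obtain ⟨j, hja, hj⟩ := hfar t a
    exact notMem_closedBall_zero_of_lt_norm_apply (i := j) (by rwa [update_of_ne hja])
  have hball' (t : Finset ι) : t.piecewise q x ∉ closedBall 0 R := by
    obtain ⟨j, -, hj⟩ := hfar t (Classical.arbitrary ι)
    exact notMem_closedBall_zero_of_lt_norm_apply hj
  simpa using joinedIn_piecewise (T := configSpace ι \ closedBall 0 R) Finset.univ
    (fun t _ => ⟨hmem t, hball' t⟩) fun t _ a _ =>
      (countable_setOf_update_notMem_configSpace (hmem t) a).mono fun z hz h =>
        hz ⟨h, hball t a z⟩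

theorem joinedIn_configSpace_diff_closedBall [DecidableEq ι] [Nonempty ι] {R : ℝ}
    {x y : ι → ℂ} (hx : x ∈ configSpace ι) (hxR : ∀ a, ∃ j ≠ a, R < ‖x j‖)
    (hy : y ∈ configSpace ι) (hyR : ∀ a, ∃ j ≠ a, R < ‖y j‖) :
    JoinedIn (configSpace ι \ closedBall 0 R) x y := by
  obtain ⟨q, hq, hqR⟩ := exists_mem_configSpace_forall_lt_norm (ι := ι) (max R (max ‖x‖ ‖y‖))
  have hfresh {w : ι → ℂ} (hw : ‖w‖ ≤ max R (max ‖x‖ ‖y‖)) (i j : ι) : q i ≠ w j := fun h =>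
    ((norm_le_pi_norm w j).trans hw).not_gt (h ▸ hqR i)
  have hqR' (i : ι) : R < ‖q i‖ := (le_max_left _ _).trans_lt (hqR i)
  exact (joinedIn_configSpace_diff_closedBall_of_fresh hx hxR hq hqR'
    (hfresh (by simp))).trans
    (joinedIn_configSpace_diff_closedBall_of_fresh hy hyR hq hqR' (hfresh (by simp))).symm

theorem exists_joinedIn_configSpace_diff_closedBall [DecidableEq ι] [Nontrivial ι] {R : ℝ}
    {x : ι → ℂ} (hx : x ∈ configSpace ι) {i : ι} (hxi : R < ‖x i‖) :
    ∃ y ∈ configSpace ι, (∀ a, ∃ j ≠ a, R < ‖y j‖) ∧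
      JoinedIn (configSpace ι \ closedBall 0 R) x y := by
  obtain ⟨j, hji⟩ := exists_ne i
  obtain ⟨b, hbR, hb⟩ := (countable_setOf_update_notMem_configSpace hx j).exists_lt_norm_notMem R
  have hball (z : ℂ) : update x j z ∉ closedBall 0 R :=
    notMem_closedBall_zero_of_lt_norm_apply (i := i) (by rwa [update_of_ne hji.symm])
  refine ⟨update x j b, not_not.1 hb, fun a => ?_, joinedIn_update
    ((countable_setOf_update_notMem_configSpace hx j).mono fun z hz h => hz ⟨h, hball z⟩)
    ⟨hx, notMem_closedBall_zero_of_lt_norm_apply hxi⟩ ⟨not_not.1 hb, hball b⟩⟩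
  rcases eq_or_ne a j with rfl | haj
  · exact ⟨i, hji.symm, by rwa [update_of_ne hji.symm]⟩
  · exact ⟨j, haj.symm, by rwa [update_self]⟩

theorem isPathConnected_configSpace_diff_closedBall [Nontrivial ι] (R : ℝ) :
    IsPathConnected (configSpace ι \ closedBall 0 R) := by
  classical
  obtain ⟨q, hq, hqR⟩ := exists_mem_configSpace_forall_lt_norm (ι := ι) R
  have hqR' (a : ι) : ∃ j ≠ a, R < ‖q j‖ := (exists_ne a).imp fun j hj => ⟨hj, hqR j⟩
  refine ⟨q, ⟨hq, notMem_closedBall_zero_of_lt_norm_apply (hqR (Classical.arbitrary ι))⟩,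
    fun x ⟨hx, hxR⟩ => ?_⟩
  obtain ⟨i, hi⟩ := notMem_closedBall_zero_iff_exists_lt_norm.1 hxR
  obtain ⟨y, hy, hyR, hxy⟩ := exists_joinedIn_configSpace_diff_closedBall hx hi
  exact (joinedIn_configSpace_diff_closedBall hq hqR' hy hyR).trans hxy.symm

theorem isPathConnected_configSpace [Nontrivial ι] : IsPathConnected (configSpace ι) := by
  simpa using isPathConnected_configSpace_diff_closedBall (ι := ι) (-1)

theorem exists_joinedIn_inter_thickening_of_apply_eq_zero_or_one [DecidableEq ι]
    [Nontrivial ι] {δ : ℝ} {y v : ι → ℂ} (hy : y ∈ configSpace ι) (hyv : dist y v < δ)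
    {i : ι} (hvi : v i = 0 ∨ v i = 1) (R : ℝ) :
    ∃ y' ∈ configSpace ι \ closedBall 0 R,
      JoinedIn (configSpace ι ∩ thickening δ (configSpace ι)ᶜ) y y' := by
  obtain ⟨j, hji⟩ := exists_ne i
  have hbad := countable_setOf_update_notMem_configSpace hy j
  obtain ⟨b, hbR, hb⟩ := hbad.exists_lt_norm_notMem R
  have hvz (z : ℂ) : update v j z ∉ configSpace ι := fun h => by
    have hvi' := h.1 i
    rw [update_of_ne hji.symm] at hvi'
    exact hvi.elim hvi'.1 hvi'.2
  refine ⟨update y j b, ⟨not_not.1 hb, notMem_closedBall_zero_of_lt_norm_apply (i := j)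
    (by rwa [update_self])⟩, ?_⟩
  simpa using joinedIn_inter_thickening_compl (f := update y j)
    (continuous_const.update j continuous_id) hbad hvz
    (fun z => (dist_update_update_le y v j z).trans_lt hyv) (a := y j) (by simpa using hy)
    (not_not.1 hb)

theorem exists_joinedIn_inter_thickening_of_apply_eq_apply [Nonempty ι] {δ : ℝ}
    {y v : ι → ℂ} (hy : y ∈ configSpace ι) (hyv : dist y v < δ) {i j : ι} (hij : v i = v j)
    (hne : i ≠ j) (R : ℝ) :
    ∃ y' ∈ configSpace ι \ closedBall 0 R,
      JoinedIn (configSpace ι ∩ thickening δ (configSpace ι)ᶜ) y y' := by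
  obtain ⟨i0⟩ := (inferInstance : Nonempty ι)
  have hbad := countable_setOf_add_notMem_configSpace hy
  obtain ⟨t, htR, ht⟩ := hbad.exists_lt_norm_notMem (R + ‖y i0‖)
  have hvt (s : ℂ) : (v + fun _ => s) ∉ configSpace ι := fun h =>
    hne (h.2 (by simp [hij]))
  have hfar : R < ‖((y + fun _ => t) : ι → ℂ) i0‖ := by
    have := norm_sub_norm_le t (-y i0)
    simp only [Pi.add_apply, sub_neg_eq_add, norm_neg] at this ⊢
    rw [add_comm]
    linarith
  refine ⟨y + fun _ => t, ⟨not_not.1 ht, notMem_closedBall_zero_of_lt_norm_apply hfar⟩, ?_⟩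
  simpa [← Pi.zero_def] using joinedIn_inter_thickening_compl (f := fun s => y + fun _ => s)
    (continuous_const.add (continuous_pi fun _ => continuous_id)) hbad hvt
    (fun s => by rwa [dist_add_right]) (a := 0) (by simpa [← Pi.zero_def] using hy)
    (not_not.1 ht)

theorem exists_joinedIn_inter_thickening [Nontrivial ι] {δ : ℝ} {y : ι → ℂ}
    (hy : y ∈ configSpace ι) (hyδ : y ∈ thickening δ (configSpace ι)ᶜ) (R : ℝ) :
    ∃ y' ∈ configSpace ι \ closedBall 0 R,
      JoinedIn (configSpace ι ∩ thickening δ (configSpace ι)ᶜ) y y' := by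
  classical
  obtain ⟨v, hv, hyv⟩ := mem_thickening_iff.1 hyδ
  by_cases hv01 : ∃ i, v i = 0 ∨ v i = 1
  · obtain ⟨i, hi⟩ := hv01
    exact exists_joinedIn_inter_thickening_of_apply_eq_zero_or_one hy hyv hi R
  · simp only [not_exists, not_or] at hv01
    obtain ⟨i, j, hij, hne⟩ := Function.not_injective_iff.1 fun h => hv ⟨hv01, h⟩
    exact exists_joinedIn_inter_thickening_of_apply_eq_apply hy hyv hij hne R

theorem exists_isCompact_superset_isPathConnected_configSpace_diff [Nontrivial ι]
    {K : Set (ι → ℂ)} (hK : IsCompact K) (hKC : K ⊆ configSpace ι) :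
    ∃ K', IsCompact K' ∧ K ⊆ K' ∧ K' ⊆ configSpace ι ∧ IsPathConnected (configSpace ι \ K') := by
  obtain ⟨δ, hδ, hdisj⟩ := (disjoint_compl_right_iff_subset.2 hKC).exists_thickenings hK
    isOpen_configSpace.isClosed_compl
  obtain ⟨R, hR⟩ := hK.isBounded.subset_closedBall 0
  set K' := closedBall 0 R \ thickening δ (configSpace ι)ᶜ
  have hfar : configSpace ι \ closedBall 0 R ⊆ configSpace ι \ K' :=
    sdiff_subset_sdiff_right sdiff_subset
  have hnear : configSpace ι ∩ thickening δ (configSpace ι)ᶜ ⊆ configSpace ι \ K' :=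
    fun y hy => ⟨hy.1, fun hyK => hyK.2 hy.2⟩
  refine ⟨K', (isCompact_closedBall 0 R).diff isOpen_thickening,
    fun x hx => ⟨hR hx, hdisj.notMem_of_mem_left (self_subset_thickening hδ K hx)⟩,
    fun x hx => not_not.1 fun h => hx.2 (self_subset_thickening hδ _ h), ?_⟩
  obtain ⟨p, hp, hpF⟩ := isPathConnected_configSpace_diff_closedBall (ι := ι) R
  refine ⟨p, hfar hp, fun y ⟨hy, hyK⟩ => ?_⟩
  by_cases hyR : y ∈ closedBall 0 R
  · obtain ⟨y', hy', hyy'⟩ :=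
      exists_joinedIn_inter_thickening hy (not_not.1 fun h => hyK ⟨hyR, h⟩) R
    exact ((hpF hy').mono hfar).trans (hyy'.mono hnear).symm
  · exact (hpF ⟨hy, hyR⟩).mono hfar

end OneEnd

/-- For n ≥ 5, the moduli space M_{0,n}, realized as the space of (n−3)-tuples
of distinct points in ℂ \ {0,1}, is connected and has exactly one end. -/
theorem stmt_15 (n : ℕ) (hn : 5 ≤ n) :
    IsConnected {x : Fin (n - 3) → ℂ |
      (∀ i, x i ≠ 0 ∧ x i ≠ 1) ∧ Function.Injective x} ∧
    ∀ K : Set (Fin (n - 3) → ℂ), IsCompact K →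
      K ⊆ {x | (∀ i, x i ≠ 0 ∧ x i ≠ 1) ∧ Function.Injective x} →
      ∃ K' : Set (Fin (n - 3) → ℂ), IsCompact K' ∧ K ⊆ K' ∧
        K' ⊆ {x | (∀ i, x i ≠ 0 ∧ x i ≠ 1) ∧ Function.Injective x} ∧
        IsConnected ({x : Fin (n - 3) → ℂ |
          (∀ i, x i ≠ 0 ∧ x i ≠ 1) ∧ Function.Injective x} \ K') := by
  have : Nontrivial (Fin (n - 3)) := Fin.nontrivial_iff_two_le.2 (by omega)
  refine ⟨isPathConnected_configSpace.isConnected, fun K hK hKC => ?_⟩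
  obtain ⟨K', hK', hKK', hK'C, hconn⟩ :=
    exists_isCompact_superset_isPathConnected_configSpace_diff hK hKC
  exact ⟨K', hK', hKK', hK'C, hconn.isConnected⟩
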